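/- arXiv:0906.3246 — 6 statements merged into one kernel-verified Lean document; each statement's English description precedes it below -/
import Mathlib

section
/- Suppose a₁, a₂, b₁, b₂, τ, σ are positive real numbers with b₂ < a₁ and 0 < a₂ - b₁ < (1/(τ+σ))·ln(a₁/b₂). Then the system of inequalities a₂·e^(yτ) - b₁·e^(-yσ) ≤ x and b₂·e^(xσ) - a₁·e^(-xτ) ≤ y has a solution with x > 0 and y > 0. -/
/-!
Choose `x = log (a₁ / b₂) / (τ + σ)`: then `b₂ e^{xσ} = a₁ e^{-xτ}`, so the second inequality holds
for every `y ≥ 0`. The left side of the first inequality is continuous in `y` with value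
`a₂ - b₁ < x` at `y = 0`, so it stays below `x` for some small `y > 0`.
-/

open Real Filter Topology

lemma exists_gt_lt_of_continuousAt {f : ℝ → ℝ} {a c : ℝ} (hf : ContinuousAt f a) (hfa : f a < c) :
    ∃ y > a, f y < c := by
  have hnear : ∀ᶠ y in 𝓝[>] a, f y < c :=
    nhdsWithin_le_nhds (hf.eventually_lt continuousAt_const hfa)
  obtain ⟨y, hy, hya⟩ := (hnear.and self_mem_nhdsWithin).exists
  exact ⟨y, hya, hy⟩

lemma mul_exp_eq_mul_exp_neg {a b s t x : ℝ} (ha : 0 < a) (hb : 0 < b)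
    (hx : x * (s + t) = log (a / b)) : b * exp (x * s) = a * exp (-(x * t)) := by
  have hxs : x * s = log (a / b) + -(x * t) := by linarith
  rw [hxs, exp_add, exp_log (div_pos ha hb), ← mul_assoc, mul_div_cancel₀ a hb.ne']

theorem stmt_5_general (a₁ a₂ b₁ b₂ τ σ : ℝ)
    (hb₂ : 0 < b₂)
    (h1 : b₂ < a₁) (h2 : 0 < a₂ - b₁)
    (h3 : a₂ - b₁ < (1 / (τ + σ)) * Real.log (a₁ / b₂)) :
    ∃ x y : ℝ, 0 < x ∧ 0 < y ∧
      a₂ * Real.exp (y * τ) - b₁ * Real.exp (-(y * σ)) ≤ x ∧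
      b₂ * Real.exp (x * σ) - a₁ * Real.exp (-(x * τ)) ≤ y := by
  set x := 1 / (τ + σ) * log (a₁ / b₂) with hx
  have hx0 : 0 < x := h2.trans h3
  -- `1 / 0 = 0` would force `x = 0`
  have hτσ : τ + σ ≠ 0 := fun h ↦ by simp [x, h] at hx0
  have hxlog : x * (σ + τ) = log (a₁ / b₂) := by
    rw [hx, add_comm σ τ]
    field_simp
  obtain ⟨y, hy0, hy⟩ := exists_gt_lt_of_continuousAt
    (f := fun y ↦ a₂ * exp (y * τ) - b₁ * exp (-(y * σ))) (a := 0) (by fun_prop) (by simpa using h3)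
  refine ⟨x, y, hx0, hy0, hy.le, ?_⟩
  rw [mul_exp_eq_mul_exp_neg (hb₂.trans h1) hb₂ hxlog, sub_self]
  exact hy0.le

theorem stmt_5 (a₁ a₂ b₁ b₂ τ σ : ℝ) (ha₁ : 0 < a₁) (ha₂ : 0 < a₂)
    (hb₁ : 0 < b₁) (hb₂ : 0 < b₂) (hτ : 0 < τ) (hσ : 0 < σ)
    (h1 : b₂ < a₁) (h2 : 0 < a₂ - b₁)
    (h3 : a₂ - b₁ < (1 / (τ + σ)) * Real.log (a₁ / b₂)) :
    ∃ x y : ℝ, 0 < x ∧ 0 < y ∧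
      a₂ * Real.exp (y * τ) - b₁ * Real.exp (-(y * σ)) ≤ x ∧
      b₂ * Real.exp (x * σ) - a₁ * Real.exp (-(x * τ)) ≤ y :=
  stmt_5_general a₁ a₂ b₁ b₂ τ σ hb₂ h1 h2 h3
end

section
/- Suppose a₁, a₂, b₁, b₂, τ, σ are positive real numbers with a₂ < b₁ and 0 < b₂ - a₁ < (1/(τ+σ))·ln(b₁/a₂). Then the system of inequalities a₂·e^(yτ) - b₁·e^(-yσ) ≤ x and b₂·e^(xσ) - a₁·e^(-xτ) ≤ y has a solution with x > 0 and y > 0. -/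
/-!
Take `y = log (b₁ / a₂) / (τ + σ)`: it balances the first inequality exactly, since then
`a₂ e^{yτ} = b₁ e^{-yσ}`, and the hypotheses say `0 < b₂ - a₁ < y`. The left side of the second
inequality is a continuous function of `x` equal to `b₂ - a₁ < y` at `x = 0`, so it stays below `y`
for some small `x > 0`, and any `x > 0` satisfies the first inequality.
-/

open Real Topology

theorem mul_exp_eq_mul_exp_neg_of_mul_add_eq_log {a b y τ σ : ℝ} (ha : 0 < a) (hb : 0 < b)
    (hy : y * (τ + σ) = Real.log (b / a)) :
    a * Real.exp (y * τ) = b * Real.exp (-(y * σ)) := by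
  have hsplit : Real.exp (y * τ) = Real.exp (y * (τ + σ)) * Real.exp (-(y * σ)) := by
    rw [← Real.exp_add]
    ring_nf
  rw [hsplit, hy, Real.exp_log (div_pos hb ha), ← mul_assoc, mul_div_cancel₀ _ ha.ne']

theorem exists_lt_of_continuousAt_of_lt {f : ℝ → ℝ} {a c : ℝ} (hf : ContinuousAt f a)
    (hfa : f a < c) : ∃ x, a < x ∧ f x < c := by
  have hnear : ∀ᶠ x in 𝓝[>] a, f x < c :=
    nhdsWithin_le_nhds (hf.eventually (gt_mem_nhds hfa))
  exact (eventually_mem_nhdsWithin.and hnear).exists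

theorem stmt_6_general (a₁ a₂ b₁ b₂ τ σ : ℝ) (ha₂ : 0 < a₂)
    (hb₁ : 0 < b₁) (hτ : 0 < τ) (hσ : 0 < σ)
    (h2 : 0 < b₂ - a₁)
    (h3 : b₂ - a₁ < (1 / (τ + σ)) * Real.log (b₁ / a₂)) :
    ∃ x y : ℝ, 0 < x ∧ 0 < y ∧
      a₂ * Real.exp (y * τ) - b₁ * Real.exp (-(y * σ)) ≤ x ∧
      b₂ * Real.exp (x * σ) - a₁ * Real.exp (-(x * τ)) ≤ y := by
  have hy : (1 / (τ + σ)) * Real.log (b₁ / a₂) * (τ + σ) = Real.log (b₁ / a₂) := by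
    rw [one_div_mul_eq_div, div_mul_cancel₀ _ (add_pos hτ hσ).ne']
  have hbalance := mul_exp_eq_mul_exp_neg_of_mul_add_eq_log ha₂ hb₁ hy
  obtain ⟨x, hx, hxy⟩ := exists_lt_of_continuousAt_of_lt
    (f := fun x => b₂ * Real.exp (x * σ) - a₁ * Real.exp (-(x * τ))) (a := 0)
    (by fun_prop) (by simpa only [zero_mul, neg_zero, Real.exp_zero, mul_one] using h3)
  exact ⟨x, _, hx, h2.trans h3, by rw [hbalance, sub_self]; exact hx.le, hxy.le⟩

theorem stmt_6 (a₁ a₂ b₁ b₂ τ σ : ℝ) (ha₁ : 0 < a₁) (ha₂ : 0 < a₂)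
    (hb₁ : 0 < b₁) (hb₂ : 0 < b₂) (hτ : 0 < τ) (hσ : 0 < σ)
    (h1 : a₂ < b₁) (h2 : 0 < b₂ - a₁)
    (h3 : b₂ - a₁ < (1 / (τ + σ)) * Real.log (b₁ / a₂)) :
    ∃ x y : ℝ, 0 < x ∧ 0 < y ∧
      a₂ * Real.exp (y * τ) - b₁ * Real.exp (-(y * σ)) ≤ x ∧
      b₂ * Real.exp (x * σ) - a₁ * Real.exp (-(x * τ)) ≤ y :=
  stmt_6_general a₁ a₂ b₁ b₂ τ σ ha₂ hb₁ hτ hσ h2 h3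
end

section
/- Let a, b, g, h: ℝ → ℝ be measurable with a(t) ≥ b(t) ≥ 0, g(t) ≤ t, h(t) ≥ t, and let t₁ be fixed. Suppose u₀: ℝ → ℝ is nonnegative, locally integrable, zero for t < t₁, and satisfies u₀(t) ≥ a(t)·exp(∫_{g(t)}^t u₀(s) ds) - b(t)·exp(-∫_t^{h(t)} u₀(s) ds) for t ≥ t₁. Define u_{n+1}(t) = a(t)·exp(∫_{g(t)}^t u_n(s) ds) - b(t)·exp(-∫_t^{h(t)} u_n(s) ds) for t ≥ t₁ (and u_{n+1}(t) = 0 for t < t₁). Then for every n and every t ≥ t₁: a(t) - b(t) ≤ u_{n+1}(t) ≤ u_n(t) ≤ u₀(t); in particular the sequence (u_n(t)) is nonincreasing in n and bounded below by 0, hence converges pointwise. -/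
/-! The map `v ↦ a·exp(∫_{g t}^t v) - b·exp(-∫_t^{h t} v)` is monotone in `v`, because
`a, b ≥ 0` and `g t ≤ t ≤ h t`, and for `v ≥ 0` it is bounded below by `a - b ≥ 0`. Since
`u₁ ≤ u₀` is the hypothesis on `u₀`, induction gives `0 ≤ uₙ₊₁ ≤ uₙ`. Each iterate stays locally
integrable: it is measurable, being built from the continuous primitive of the previous one,
and it is dominated by the previous one. A nonincreasing sequence bounded below converges. -/

open Real MeasureTheory Filter intervalIntegral

theorem MeasureTheory.LocallyIntegrable.intervalIntegrable {E : Type*} [NormedAddCommGroup E]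
    {f : ℝ → E} (hf : LocallyIntegrable f) (a b : ℝ) : IntervalIntegrable f volume a b :=
  (hf.integrableOn_isCompact isCompact_uIcc).intervalIntegrable

theorem MeasureTheory.LocallyIntegrable.of_nonneg_of_le {X : Type*} [TopologicalSpace X]
    [MeasurableSpace X] {μ : Measure X} {f w : X → ℝ} (hf : LocallyIntegrable f μ)
    (hw : Measurable w) (hw0 : 0 ≤ w) (hwf : w ≤ f) : LocallyIntegrable w μ :=
  hf.mono hw.aestronglyMeasurable <| ae_of_all _ fun x => by
    rw [Real.norm_of_nonneg (hw0 x), Real.norm_of_nonneg ((hw0 x).trans (hwf x))]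
    exact hwf x

noncomputable def mixedDelayMap (a b g h v : ℝ → ℝ) (t : ℝ) : ℝ :=
  a t * exp (∫ s in g t..t, v s) - b t * exp (-∫ s in t..h t, v s)

section MixedDelayMap

variable {a b g h v w : ℝ → ℝ} {t : ℝ}

theorem sub_le_mixedDelayMap (hab : b t ≤ a t) (hb : 0 ≤ b t) (hg : g t ≤ t) (hh : t ≤ h t)
    (hv : 0 ≤ v) : a t - b t ≤ mixedDelayMap a b g h v t := by
  have hI : 0 ≤ ∫ s in g t..t, v s := integral_nonneg hg fun s _ => hv s
  have hJ : 0 ≤ ∫ s in t..h t, v s := integral_nonneg hh fun s _ => hv s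
  have ha_le : a t ≤ a t * exp (∫ s in g t..t, v s) :=
    le_mul_of_one_le_right (hb.trans hab) (one_le_exp hI)
  have hb_ge : b t * exp (-∫ s in t..h t, v s) ≤ b t :=
    mul_le_of_le_one_right hb (exp_le_one_iff.2 (neg_nonpos.2 hJ))
  unfold mixedDelayMap
  linarith

theorem mixedDelayMap_mono (ha : 0 ≤ a t) (hb : 0 ≤ b t) (hg : g t ≤ t) (hh : t ≤ h t)
    (hw : LocallyIntegrable w) (hv : LocallyIntegrable v) (hwv : w ≤ v) :
    mixedDelayMap a b g h w t ≤ mixedDelayMap a b g h v t := by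
  have hI : ∫ s in g t..t, w s ≤ ∫ s in g t..t, v s :=
    integral_mono_on hg (hw.intervalIntegrable _ _) (hv.intervalIntegrable _ _) fun s _ => hwv s
  have hJ : ∫ s in t..h t, w s ≤ ∫ s in t..h t, v s :=
    integral_mono_on hh (hw.intervalIntegrable _ _) (hv.intervalIntegrable _ _) fun s _ => hwv s
  unfold mixedDelayMap
  gcongr

theorem measurable_mixedDelayMap (ha : Measurable a) (hb : Measurable b) (hg : Measurable g)
    (hh : Measurable h) (hv : LocallyIntegrable v) : Measurable (mixedDelayMap a b g h v) := by
  set Φ : ℝ → ℝ := fun x => ∫ s in 0..x, v s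
  have hΦ : Measurable Φ :=
    (continuous_primitive (fun _ _ => hv.intervalIntegrable _ _) 0).measurable
  have hmap : mixedDelayMap a b g h v =
      fun t => a t * exp (Φ t - Φ (g t)) - b t * exp (-(Φ (h t) - Φ t)) := by
    funext t
    simp only [mixedDelayMap, Φ]
    rw [integral_interval_sub_left (hv.intervalIntegrable _ _) (hv.intervalIntegrable _ _),
      integral_interval_sub_left (hv.intervalIntegrable _ _) (hv.intervalIntegrable _ _)]
  rw [hmap]
  fun_prop

end MixedDelayMap

theorem stmt_10_general (a b g h : ℝ → ℝ) (t₁ : ℝ)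
    (ha : Measurable a) (hb : Measurable b) (hg : Measurable g) (hh : Measurable h)
    (hab : ∀ t, b t ≤ a t) (hb0 : ∀ t, 0 ≤ b t)
    (hgt : ∀ t, g t ≤ t) (hht : ∀ t, t ≤ h t)
    (u : ℕ → ℝ → ℝ)
    (hu0nonneg : ∀ t, 0 ≤ u 0 t)
    (hu0loc : LocallyIntegrable (u 0) volume)
    (hu0ineq : ∀ t, t₁ ≤ t →
      a t * Real.exp (∫ s in (g t)..t, u 0 s)
        - b t * Real.exp (-∫ s in t..(h t), u 0 s) ≤ u 0 t)
    (hrec : ∀ n t, t₁ ≤ t →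
      u (n + 1) t = a t * Real.exp (∫ s in (g t)..t, u n s)
        - b t * Real.exp (-∫ s in t..(h t), u n s))
    (hreczero : ∀ n t, t < t₁ → u (n + 1) t = 0) :
    (∀ n t, t₁ ≤ t →
      a t - b t ≤ u (n + 1) t ∧ u (n + 1) t ≤ u n t ∧ u n t ≤ u 0 t) ∧
    (∀ t, t₁ ≤ t → ∃ L : ℝ, Tendsto (fun n => u n t) atTop (nhds L)) := by
  set N : (ℝ → ℝ) → ℝ → ℝ := fun v => (Set.Ici t₁).indicator (mixedDelayMap a b g h v)
  have hnext : ∀ n, u (n + 1) = N (u n) := fun n => funext fun t => by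
    by_cases ht : t₁ ≤ t
    · simp [N, ht, hrec n t ht, mixedDelayMap]
    · simp [N, ht, hreczero n t (not_le.1 ht)]
  have hlower : ∀ v, 0 ≤ v → ∀ t, t₁ ≤ t → a t - b t ≤ N v t := fun v hv t ht => by
    simpa [N, ht] using sub_le_mixedDelayMap (hab t) (hb0 t) (hgt t) (hht t) hv
  have hN_nonneg : ∀ v, 0 ≤ v → 0 ≤ N v := fun v hv => Set.indicator_nonneg fun t _ =>
    (sub_nonneg.2 (hab t)).trans (sub_le_mixedDelayMap (hab t) (hb0 t) (hgt t) (hht t) hv)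
  have key : ∀ n, 0 ≤ u n ∧ LocallyIntegrable (u n) ∧ u (n + 1) ≤ u n := by
    intro n
    induction n with
    | zero =>
      exact ⟨hu0nonneg, hu0loc, hnext 0 ▸ Set.indicator_le' hu0ineq fun t _ => hu0nonneg t⟩
    | succ n ih =>
      obtain ⟨h0, hloc, hle⟩ := ih
      have h0' : 0 ≤ u (n + 1) := hnext n ▸ hN_nonneg _ h0
      have hloc' : LocallyIntegrable (u (n + 1)) := hloc.of_nonneg_of_le
        (hnext n ▸ (measurable_mixedDelayMap ha hb hg hh hloc).indicator measurableSet_Ici) h0' hle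
      refine ⟨h0', hloc', (hnext (n + 1)).trans_le ?_⟩
      refine (Set.indicator_mono fun t => ?_).trans_eq (hnext n).symm
      exact mixedDelayMap_mono ((hb0 t).trans (hab t)) (hb0 t) (hgt t) (hht t) hloc' hloc hle
  have hanti : Antitone u := antitone_nat_of_succ_le fun n => (key n).2.2
  refine ⟨fun n t ht => ⟨hnext n ▸ hlower _ (key n).1 t ht, (key n).2.2 t, hanti n.zero_le t⟩,
    fun t _ => ⟨_, tendsto_atTop_ciInf (fun m n hmn => hanti hmn t) ⟨0, ?_⟩⟩⟩
  rintro _ ⟨n, rfl⟩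
  exact (key n).1 t

theorem stmt_10 (a b g h : ℝ → ℝ) (t₁ : ℝ)
    (ha : Measurable a) (hb : Measurable b) (hg : Measurable g) (hh : Measurable h)
    (hab : ∀ t, b t ≤ a t) (hb0 : ∀ t, 0 ≤ b t)
    (hgt : ∀ t, g t ≤ t) (hht : ∀ t, t ≤ h t)
    (u : ℕ → ℝ → ℝ)
    (hu0nonneg : ∀ t, 0 ≤ u 0 t)
    (hu0loc : LocallyIntegrable (u 0) volume)
    (hu0zero : ∀ t, t < t₁ → u 0 t = 0)
    (hu0ineq : ∀ t, t₁ ≤ t →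
      a t * Real.exp (∫ s in (g t)..t, u 0 s)
        - b t * Real.exp (-∫ s in t..(h t), u 0 s) ≤ u 0 t)
    (hrec : ∀ n t, t₁ ≤ t →
      u (n + 1) t = a t * Real.exp (∫ s in (g t)..t, u n s)
        - b t * Real.exp (-∫ s in t..(h t), u n s))
    (hreczero : ∀ n t, t < t₁ → u (n + 1) t = 0) :
    (∀ n t, t₁ ≤ t →
      a t - b t ≤ u (n + 1) t ∧ u (n + 1) t ≤ u n t ∧ u n t ≤ u 0 t) ∧
    (∀ t, t₁ ≤ t → ∃ L : ℝ, Tendsto (fun n => u n t) atTop (nhds L)) :=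
  stmt_10_general a b g h t₁ ha hb hg hh hab hb0 hgt hht u hu0nonneg hu0loc hu0ineq hrec hreczero
end

section
/- Let u: ℝ → ℝ be nonnegative and locally integrable with u(t) = 0 for t < t₁, and suppose u(t) ≥ a(t)·exp(∫_{g(t)}^t u(s) ds) - b(t)·exp(-∫_t^{h(t)} u(s) ds) for t ≥ t₁, where a(t) ≥ b(t) ≥ 0, g(t) ≤ t ≤ h(t). If moreover ∫_0^∞ [a(s) - b(s)] ds = ∞, then the function x(t) = x(t₁)·exp(-∫_{t₁}^t u(s) ds) (x(t₁) > 0) satisfies 0 < x(t) ≤ x(t₁)·exp(-∫_{t₁}^t [a(s) - b(s)] ds) for t ≥ t₁ and x(t) → 0 as t → ∞. -/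
/-!
Since `∫ u ≥ 0` on every interval, the two exponentials in the integral inequality are `≥ 1` and
`≤ 1` respectively, so `u ≥ a - b` pointwise on `[t₁, ∞)`. Integrating gives the bound on `x`, and
the divergence of `∫ (a - b)` forces `∫_{t₁}^t u → ∞`, hence `x(t) → 0`.
-/

open Real MeasureTheory Filter intervalIntegral

lemma sub_le_mul_exp_sub_mul_exp_neg {a b I J : ℝ} (ha : 0 ≤ a) (hb : 0 ≤ b) (hI : 0 ≤ I)
    (hJ : 0 ≤ J) : a - b ≤ a * exp I - b * exp (-J) := by
  have hexpI : a ≤ a * exp I := le_mul_of_one_le_right ha (one_le_exp hI)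
  have hexpJ : b * exp (-J) ≤ b :=
    mul_le_of_le_one_right hb (exp_le_one_iff.mpr (neg_nonpos.mpr hJ))
  linarith

/-- The junk value `0` of a non-integrable integral rules out divergence to `+∞`. -/
lemma IntervalIntegrable.of_tendsto_integral_atTop {f : ℝ → ℝ} {c : ℝ}
    (hf : Tendsto (fun T => ∫ s in c..T, f s) atTop atTop) {x y : ℝ} (hx : c ≤ x) (hy : c ≤ y) :
    IntervalIntegrable f volume x y := by
  obtain ⟨T, hT⟩ := ((hf.eventually_gt_atTop 0).and (eventually_ge_atTop (max x y))).exists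
  have hcT : IntervalIntegrable f volume c T := by
    by_contra hnot
    simp [integral_undef hnot] at hT
  exact hcT.mono_set (Set.uIcc_subset_uIcc
    (Set.mem_uIcc_of_le hx ((le_max_left x y).trans hT.2))
    (Set.mem_uIcc_of_le hy ((le_max_right x y).trans hT.2)))

lemma tendsto_integral_atTop_of_eventually_le {f u : ℝ → ℝ} {c d : ℝ}
    (hf : Tendsto (fun T => ∫ s in c..T, f s) atTop atTop)
    (hu : ∀ x y, IntervalIntegrable u volume x y) (hfu : ∀ᶠ t in atTop, f t ≤ u t) :
    Tendsto (fun T => ∫ s in d..T, u s) atTop atTop := by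
  obtain ⟨T₀, hT₀⟩ := eventually_atTop.mp (hfu.and (eventually_ge_atTop c))
  have hcT₀ : c ≤ T₀ := (hT₀ T₀ le_rfl).2
  have hlower : Tendsto (fun T => (∫ s in c..T, f s) + ((∫ s in d..T₀, u s) - ∫ s in c..T₀, f s))
      atTop atTop :=
    tendsto_atTop_add_const_right _ _ hf
  have hfint : ∀ {x y}, c ≤ x → c ≤ y → IntervalIntegrable f volume x y :=
    IntervalIntegrable.of_tendsto_integral_atTop hf
  refine tendsto_atTop_mono' _ ?_ hlower
  filter_upwards [eventually_ge_atTop T₀] with T hT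
  have htail : ∫ s in T₀..T, f s ≤ ∫ s in T₀..T, u s :=
    integral_mono_on hT (hfint hcT₀ (hcT₀.trans hT)) (hu T₀ T)
      fun s hs => (hT₀ s hs.1).1
  have hsplit_f : (∫ s in c..T, f s) - ∫ s in c..T₀, f s = ∫ s in T₀..T, f s :=
    integral_interval_sub_left (hfint le_rfl (hcT₀.trans hT)) (hfint le_rfl hcT₀)
  have hsplit_u : (∫ s in d..T₀, u s) + ∫ s in T₀..T, u s = ∫ s in d..T, u s :=
    integral_add_adjacent_intervals (hu d T₀) (hu T₀ T)
  linarith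

/-- Unlike `integral_mono_on`, no integrability of `f` is needed: otherwise its integral is `0`. -/
lemma integral_le_integral_of_le_of_nonneg {f u : ℝ → ℝ} {x y : ℝ} (hxy : x ≤ y)
    (hu : IntervalIntegrable u volume x y) (hu0 : ∀ t ∈ Set.Icc x y, 0 ≤ u t)
    (hfu : ∀ t ∈ Set.Icc x y, f t ≤ u t) :
    ∫ s in x..y, f s ≤ ∫ s in x..y, u s := by
  by_cases hf : IntervalIntegrable f volume x y
  · exact integral_mono_on hxy hf hu hfu
  · rw [integral_undef hf]
    exact integral_nonneg hxy hu0

theorem stmt_14_general (a b g h u : ℝ → ℝ) (t₁ x₁ : ℝ) (hx₁ : 0 < x₁)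
    (hab : ∀ t, b t ≤ a t) (hb0 : ∀ t, 0 ≤ b t)
    (hgt : ∀ t, g t ≤ t) (hht : ∀ t, t ≤ h t)
    (hunonneg : ∀ t, 0 ≤ u t)
    (huloc : LocallyIntegrable u volume)
    (huineq : ∀ t, t₁ ≤ t →
      a t * Real.exp (∫ s in (g t)..t, u s)
        - b t * Real.exp (-∫ s in t..(h t), u s) ≤ u t)
    (hdiv : Tendsto (fun T : ℝ => ∫ s in (0 : ℝ)..T, (a s - b s)) atTop atTop) :
    (∀ t, t₁ ≤ t →
      0 < x₁ * Real.exp (-∫ s in t₁..t, u s) ∧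
      x₁ * Real.exp (-∫ s in t₁..t, u s)
        ≤ x₁ * Real.exp (-∫ s in t₁..t, (a s - b s))) ∧
    Tendsto (fun t : ℝ => x₁ * Real.exp (-∫ s in t₁..t, u s)) atTop (nhds 0) := by
  have huint : ∀ x y, IntervalIntegrable u volume x y := fun _ _ =>
    (huloc.integrableOn_isCompact isCompact_uIcc).intervalIntegrable
  have hpoint : ∀ t, t₁ ≤ t → a t - b t ≤ u t := fun t ht =>
    (sub_le_mul_exp_sub_mul_exp_neg ((hb0 t).trans (hab t)) (hb0 t)
      (integral_nonneg (hgt t) fun s _ => hunonneg s)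
      (integral_nonneg (hht t) fun s _ => hunonneg s)).trans (huineq t ht)
  refine ⟨fun t ht => ⟨by positivity, ?_⟩, ?_⟩
  · have hmono : ∫ s in t₁..t, (a s - b s) ≤ ∫ s in t₁..t, u s :=
      integral_le_integral_of_le_of_nonneg ht (huint t₁ t) (fun s _ => hunonneg s)
        fun s hs => hpoint s hs.1
    gcongr
  · have hdivu : Tendsto (fun t => ∫ s in t₁..t, u s) atTop atTop :=
      tendsto_integral_atTop_of_eventually_le hdiv huint
        (eventually_atTop.mpr ⟨t₁, hpoint⟩)
    simpa using (tendsto_exp_atBot.comp (tendsto_neg_atTop_atBot.comp hdivu)).const_mul x₁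

theorem stmt_14 (a b g h u : ℝ → ℝ) (t₁ x₁ : ℝ) (hx₁ : 0 < x₁)
    (hab : ∀ t, b t ≤ a t) (hb0 : ∀ t, 0 ≤ b t)
    (hgt : ∀ t, g t ≤ t) (hht : ∀ t, t ≤ h t)
    (hunonneg : ∀ t, 0 ≤ u t)
    (huloc : LocallyIntegrable u volume)
    (huzero : ∀ t, t < t₁ → u t = 0)
    (huineq : ∀ t, t₁ ≤ t →
      a t * Real.exp (∫ s in (g t)..t, u s)
        - b t * Real.exp (-∫ s in t..(h t), u s) ≤ u t)
    (hdiv : Tendsto (fun T : ℝ => ∫ s in (0 : ℝ)..T, (a s - b s)) atTop atTop) :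
    (∀ t, t₁ ≤ t →
      0 < x₁ * Real.exp (-∫ s in t₁..t, u s) ∧
      x₁ * Real.exp (-∫ s in t₁..t, u s)
        ≤ x₁ * Real.exp (-∫ s in t₁..t, (a s - b s))) ∧
    Tendsto (fun t : ℝ => x₁ * Real.exp (-∫ s in t₁..t, u s)) atTop (nhds 0) :=
  stmt_14_general a b g h u t₁ x₁ hx₁ hab hb0 hgt hht hunonneg huloc huineq hdiv
end

section
/- Let a₁, a₂, b₁, b₂, τ, σ > 0 and suppose (d₁, d₂) with d₁ > 0, d₂ > 0 satisfies a₂·e^(d₂τ) - b₁·e^(-d₂σ) ≤ d₁ and b₂·e^(d₁σ) - a₁·e^(-d₁τ) ≤ d₂. Let a, b, g, h satisfy a₁ ≤ a(t) ≤ a₂, b₁ ≤ b(t) ≤ b₂, t - τ ≤ g(t) ≤ t, t ≤ h(t) ≤ t + σ. Then for any measurable u with -d₂ ≤ u(t) ≤ d₁ for all t, the function (Au)(t) = a(t)·exp(-∫_{g(t)}^t u(s) ds) - b(t)·exp(∫_t^{h(t)} u(s) ds) also satisfies -d₂ ≤ (Au)(t) ≤ d₁ for all t. -/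
/-!
Over the delay intervals, of length at most `τ` and `σ`, the integral of `u` lies in
`[-d₂τ, d₁τ]` and `[-d₂σ, d₁σ]`. By monotonicity of `exp`, each of the two terms of `Au` is then
squeezed between the extreme values occurring in the two inequalities satisfied by `(d₁, d₂)`.
-/

open Real MeasureTheory intervalIntegral

lemma intervalIntegrable_of_forall_mem_Icc {u : ℝ → ℝ} (hu : Measurable u) {m M : ℝ}
    (hbd : ∀ s, m ≤ u s ∧ u s ≤ M) (x y : ℝ) : IntervalIntegrable u volume x y :=
  (intervalIntegrable_const (c := max |m| |M|)).mono_fun hu.aestronglyMeasurable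
    (Filter.Eventually.of_forall fun s => by
      simpa only [Real.norm_eq_abs, abs_of_nonneg ((abs_nonneg m).trans (le_max_left _ _))]
        using abs_le_max_abs_abs (hbd s).1 (hbd s).2)

lemma integral_mem_Icc_of_forall_mem_Icc {u : ℝ → ℝ} (hu : Measurable u) {m M x y : ℝ}
    (hbd : ∀ s, m ≤ u s ∧ u s ≤ M) (hxy : x ≤ y) :
    m * (y - x) ≤ ∫ s in x..y, u s ∧ ∫ s in x..y, u s ≤ M * (y - x) := by
  have hint := intervalIntegrable_of_forall_mem_Icc hu hbd x y
  constructor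
  · simpa [mul_comm] using
      integral_mono_on hxy intervalIntegrable_const hint fun s _ => (hbd s).1
  · simpa [mul_comm] using
      integral_mono_on hxy hint intervalIntegrable_const fun s _ => (hbd s).2

lemma integral_mem_Icc_of_le_add {u : ℝ → ℝ} (hu : Measurable u) {c d x y L : ℝ}
    (hc : 0 ≤ c) (hd : 0 ≤ d) (hbd : ∀ s, -c ≤ u s ∧ u s ≤ d) (hxy : x ≤ y) (hyx : y ≤ x + L) :
    -(c * L) ≤ ∫ s in x..y, u s ∧ ∫ s in x..y, u s ≤ d * L := by
  obtain ⟨hlow, hupp⟩ := integral_mem_Icc_of_forall_mem_Icc hu hbd hxy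
  have hlen : y - x ≤ L := by linarith
  constructor
  · linarith [mul_le_mul_of_nonneg_left hlen hc]
  · linarith [mul_le_mul_of_nonneg_left hlen hd]

lemma mul_exp_mem_Icc {a₁ a₂ a p q x : ℝ} (ha₁ : 0 ≤ a₁) (ha : a₁ ≤ a ∧ a ≤ a₂)
    (hx : p ≤ x ∧ x ≤ q) : a₁ * exp p ≤ a * exp x ∧ a * exp x ≤ a₂ * exp q :=
  ⟨mul_le_mul ha.1 (exp_le_exp.2 hx.1) (exp_pos _).le (ha₁.trans ha.1),
    mul_le_mul ha.2 (exp_le_exp.2 hx.2) (exp_pos _).le ((ha₁.trans ha.1).trans ha.2)⟩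

theorem stmt_16_general (a₁ a₂ b₁ b₂ τ σ d₁ d₂ : ℝ)
    (ha₁ : 0 < a₁) (hb₁ : 0 < b₁)
    (hd₁ : 0 < d₁) (hd₂ : 0 < d₂)
    (hsys1 : a₂ * Real.exp (d₂ * τ) - b₁ * Real.exp (-(d₂ * σ)) ≤ d₁)
    (hsys2 : b₂ * Real.exp (d₁ * σ) - a₁ * Real.exp (-(d₁ * τ)) ≤ d₂)
    (a b g h : ℝ → ℝ)
    (hab : ∀ t, a₁ ≤ a t ∧ a t ≤ a₂) (hbb : ∀ t, b₁ ≤ b t ∧ b t ≤ b₂)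
    (hg : ∀ t, t - τ ≤ g t ∧ g t ≤ t) (hh : ∀ t, t ≤ h t ∧ h t ≤ t + σ)
    (u : ℝ → ℝ) (hu : Measurable u)
    (hubd : ∀ t, -d₂ ≤ u t ∧ u t ≤ d₁) :
    ∀ t, -d₂ ≤ a t * Real.exp (-∫ s in (g t)..t, u s)
            - b t * Real.exp (∫ s in t..(h t), u s) ∧
         a t * Real.exp (-∫ s in (g t)..t, u s)
            - b t * Real.exp (∫ s in t..(h t), u s) ≤ d₁ := by
  intro t
  obtain ⟨hI₁l, hI₁u⟩ := integral_mem_Icc_of_le_add (L := τ) hu hd₂.le hd₁.le hubd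
    (hg t).2 (by linarith [(hg t).1])
  obtain ⟨hI₂l, hI₂u⟩ := integral_mem_Icc_of_le_add hu hd₂.le hd₁.le hubd (hh t).1 (hh t).2
  obtain ⟨hAl, hAu⟩ := mul_exp_mem_Icc (q := d₂ * τ) ha₁.le (hab t)
    ⟨neg_le_neg hI₁u, by linarith⟩
  obtain ⟨hBl, hBu⟩ := mul_exp_mem_Icc hb₁.le (hbb t) ⟨hI₂l, hI₂u⟩
  constructor <;> linarith

theorem stmt_16 (a₁ a₂ b₁ b₂ τ σ d₁ d₂ : ℝ)
    (ha₁ : 0 < a₁) (ha₂ : 0 < a₂) (hb₁ : 0 < b₁) (hb₂ : 0 < b₂)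
    (hτ : 0 < τ) (hσ : 0 < σ) (hd₁ : 0 < d₁) (hd₂ : 0 < d₂)
    (hsys1 : a₂ * Real.exp (d₂ * τ) - b₁ * Real.exp (-(d₂ * σ)) ≤ d₁)
    (hsys2 : b₂ * Real.exp (d₁ * σ) - a₁ * Real.exp (-(d₁ * τ)) ≤ d₂)
    (a b g h : ℝ → ℝ)
    (hab : ∀ t, a₁ ≤ a t ∧ a t ≤ a₂) (hbb : ∀ t, b₁ ≤ b t ∧ b t ≤ b₂)
    (hg : ∀ t, t - τ ≤ g t ∧ g t ≤ t) (hh : ∀ t, t ≤ h t ∧ h t ≤ t + σ)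
    (u : ℝ → ℝ) (hu : Measurable u)
    (hubd : ∀ t, -d₂ ≤ u t ∧ u t ≤ d₁) :
    ∀ t, -d₂ ≤ a t * Real.exp (-∫ s in (g t)..t, u s)
            - b t * Real.exp (∫ s in t..(h t), u s) ∧
         a t * Real.exp (-∫ s in (g t)..t, u s)
            - b t * Real.exp (∫ s in t..(h t), u s) ≤ d₁ :=
  stmt_16_general a₁ a₂ b₁ b₂ τ σ d₁ d₂ ha₁ hb₁ hd₁ hd₂ hsys1 hsys2 a b g h hab hbb hg hh u hu hubd
end

section
/- Let a₁, a₂, b₁, b₂, τ, σ > 0 with b₂ < a₁ and 0 < a₂ - b₁ < (1/(τ+σ))·ln(a₁/b₂). Define f(x) = b₂·e^(xσ) - a₁·e^(-xτ) and g(y) = a₂·e^(yτ) - b₁·e^(-yσ). Then: (i) g is strictly increasing and hence invertible on ℝ; (ii) f(x₁) = 0 where x₁ = (1/(τ+σ))·ln(a₁/b₂) > 0; (iii) setting h(x) = g⁻¹(x) - f(x) one has h(a₂ - b₁) > 0 and h(x) → -∞ as x → ∞; (iv) hence there exists x₀ > a₂ - b₁ > 0 with g⁻¹(x₀) = f(x₀)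 > 0, giving a positive solution (x₀, f(x₀)) of the system g(y) ≤ x, f(x) ≤ y. -/
/-!
Both `g` and `f` are instances of `y ↦ a e^{yτ} - b e^{-yσ}` with positive parameters, which is
strictly increasing and onto `ℝ`; so `g⁻¹` is an order isomorphism of `ℝ` with
`g⁻¹(a₂ - b₁) = 0`, and since `g(y) ≥ a₂(1 + yτ) - b₁` for `y ≥ 0`, `g⁻¹` grows at most linearly.
Monotonicity of `f` and `f(x₁) = 0` give `f(a₂ - b₁) < 0`, so `h = g⁻¹ - f` is positive at
`a₂ - b₁`, while the exponential growth of `f` drives `h` to `-∞`. The intermediate value theorem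
yields a root `x₀ > a₂ - b₁` of `h`, and `f(x₀) = g⁻¹(x₀) > g⁻¹(a₂ - b₁) = 0`.
-/

open Real Filter

noncomputable section

/-- The paper's `g` is `expDiff a₂ b₁ τ σ` and its `f` is `expDiff b₂ a₁ σ τ`. -/
def expDiff (a b τ σ y : ℝ) : ℝ := a * exp (y * τ) - b * exp (-(y * σ))

namespace expDiff

variable {a b τ σ : ℝ}

theorem neg_apply (y : ℝ) : expDiff a b τ σ (-y) = -expDiff b a σ τ y := by
  simp only [expDiff, neg_mul, neg_neg]
  ring

theorem apply_zero : expDiff a b τ σ 0 = a - b := by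
  simp [expDiff]

theorem continuous : Continuous (expDiff a b τ σ) := by
  unfold expDiff
  fun_prop

theorem strictMono (ha : 0 < a) (hb : 0 ≤ b) (hτ : 0 < τ) (hσ : 0 ≤ σ) :
    StrictMono (expDiff a b τ σ) := by
  intro u v huv
  have hτ_part : a * exp (u * τ) < a * exp (v * τ) := by gcongr
  have hσ_part : b * exp (-(v * σ)) ≤ b * exp (-(u * σ)) := by gcongr
  unfold expDiff
  linarith

theorem mul_exp_sub_le (hb : 0 ≤ b) (hσ : 0 ≤ σ) {y : ℝ} (hy : 0 ≤ y) :
    a * exp (y * τ) - b ≤ expDiff a b τ σ y := by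
  have : exp (-(y * σ)) ≤ 1 := exp_le_one_iff.2 (by nlinarith)
  unfold expDiff
  nlinarith

theorem apply_log_div_eq_zero (ha : 0 < a) (hb : 0 < b) (hτσ : τ + σ ≠ 0) :
    expDiff a b τ σ (log (b / a) / (τ + σ)) = 0 := by
  set x := log (b / a) / (τ + σ)
  have hx : x * τ = log (b / a) + -(x * σ) := by
    simp only [x]; field_simp; ring
  rw [expDiff, sub_eq_zero, hx, exp_add, exp_log (div_pos hb ha)]
  field_simp

theorem tendsto_atTop (ha : 0 < a) (hb : 0 ≤ b) (hτ : 0 < τ) (hσ : 0 ≤ σ) :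
    Tendsto (expDiff a b τ σ) atTop atTop := by
  have hexp : Tendsto (fun y => a * exp (y * τ) - b) atTop atTop :=
    tendsto_atTop_add_const_right _ _
      ((tendsto_exp_atTop.comp (tendsto_id.atTop_mul_const hτ)).const_mul_atTop ha)
  exact tendsto_atTop_mono' _
    ((eventually_ge_atTop 0).mono fun y hy => mul_exp_sub_le hb hσ hy) hexp

theorem tendsto_atBot (ha : 0 ≤ a) (hb : 0 < b) (hτ : 0 ≤ τ) (hσ : 0 < σ) :
    Tendsto (expDiff a b τ σ) atBot atBot := by
  have := tendsto_neg_atTop_atBot.comp ((tendsto_atTop hb ha hσ hτ).comp tendsto_neg_atBot_atTop)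
  refine this.congr fun y => ?_
  simp [neg_apply]

theorem surjective (ha : 0 < a) (hb : 0 < b) (hτ : 0 < τ) (hσ : 0 < σ) :
    Function.Surjective (expDiff a b τ σ) :=
  continuous.surjective (tendsto_atTop ha hb.le hτ hσ.le) (tendsto_atBot ha.le hb hτ.le hσ)

def orderIso (ha : 0 < a) (hb : 0 < b) (hτ : 0 < τ) (hσ : 0 < σ) : ℝ ≃o ℝ :=
  (strictMono ha hb.le hτ hσ.le).orderIsoOfSurjective _ (surjective ha hb hτ hσ)

theorem coe_orderIso (ha : 0 < a) (hb : 0 < b) (hτ : 0 < τ) (hσ : 0 < σ) :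
    ⇑(orderIso ha hb hτ hσ) = expDiff a b τ σ :=
  StrictMono.coe_orderIsoOfSurjective _ _ _

theorem orderIso_symm_le (ha : 0 < a) (hb : 0 < b) (hτ : 0 < τ) (hσ : 0 < σ) {x : ℝ}
    (hx : a - b ≤ x) : (orderIso ha hb hτ hσ).symm x ≤ (x - a + b) / (a * τ) := by
  set e := orderIso ha hb hτ hσ
  set y := e.symm x
  have hy : 0 ≤ y := e.le_symm_apply.2 (by rwa [coe_orderIso, apply_zero])
  have hxy : expDiff a b τ σ y = x := by rw [← coe_orderIso ha hb hτ hσ, e.apply_symm_apply]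
  have hlin := mul_exp_sub_le (a := a) (τ := τ) hb.le hσ.le hy
  have := add_one_le_exp (y * τ)
  rw [le_div_iff₀ (mul_pos ha hτ)]
  nlinarith

end expDiff

theorem OrderIso.invFun_eq_symm {α β : Type*} [Preorder α] [Preorder β] [Nonempty α]
    (e : α ≃o β) : Function.invFun e = e.symm :=
  funext fun y => e.injective <| by rw [Function.invFun_eq (e.surjective y), e.apply_symm_apply]

theorem tendsto_mul_exp_sub_mul_atTop {a τ : ℝ} (ha : 0 < a) (hτ : 0 < τ) (c : ℝ) :
    Tendsto (fun x => a * exp (x * τ) - c * x) atTop atTop := by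
  have hratio : Tendsto (fun x => a * exp (x * τ) / x - c) atTop atTop := by
    refine tendsto_atTop_add_const_right _ _ <|
      (((tendsto_exp_div_pow_atTop 1).comp (tendsto_id.atTop_mul_const hτ)).const_mul_atTop
        (mul_pos ha hτ)).congr' ?_
    filter_upwards [eventually_gt_atTop 0] with x hx
    simp only [Function.comp_apply, id, pow_one]
    field_simp
  refine (tendsto_id.atTop_mul_atTop₀ hratio).congr' ?_
  filter_upwards [eventually_gt_atTop 0] with x hx
  simp only [id]
  field_simp

theorem tendsto_sub_expDiff_atBot {u : ℝ → ℝ} {a b τ σ c d : ℝ}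
    (hu : ∀ᶠ x in atTop, u x ≤ c * x + d) (ha : 0 < a) (hb : 0 ≤ b) (hτ : 0 < τ) (hσ : 0 ≤ σ) :
    Tendsto (fun x => u x - expDiff a b τ σ x) atTop atBot := by
  have hbound : Tendsto (fun x => -(a * exp (x * τ) - c * x) + (d + b)) atTop atBot :=
    tendsto_atBot_add_const_right _ _
      (tendsto_neg_atTop_atBot.comp (tendsto_mul_exp_sub_mul_atTop ha hτ c))
  refine tendsto_atBot_mono' _ ?_ hbound
  filter_upwards [hu, eventually_ge_atTop 0] with x hux hx
  linarith [expDiff.mul_exp_sub_le (a := a) (τ := τ) hb hσ hx]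

theorem exists_gt_eq_zero_of_tendsto_atBot {h : ℝ → ℝ} (hh : Continuous h) {c : ℝ} (hc : 0 < h c)
    (htop : Tendsto h atTop atBot) : ∃ x, c < x ∧ h x = 0 :=
  intermediate_value_Ioi' hh.continuousOn htop hc

end

theorem stmt_18_general (a₁ a₂ b₁ b₂ τ σ : ℝ)
    (ha₁ : 0 < a₁) (ha₂ : 0 < a₂) (hb₁ : 0 < b₁) (hb₂ : 0 < b₂)
    (hτ : 0 < τ) (hσ : 0 < σ)
    (h1 : b₂ < a₁)
    (h3 : a₂ - b₁ < (1 / (τ + σ)) * Real.log (a₁ / b₂)) :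
    StrictMono (fun y : ℝ => a₂ * Real.exp (y * τ) - b₁ * Real.exp (-(y * σ))) ∧
    (b₂ * Real.exp (((1 / (τ + σ)) * Real.log (a₁ / b₂)) * σ)
      - a₁ * Real.exp (-((1 / (τ + σ)) * Real.log (a₁ / b₂)) * τ) = 0) ∧
    (0 < (1 / (τ + σ)) * Real.log (a₁ / b₂)) ∧
    (0 < Function.invFun (fun y : ℝ => a₂ * Real.exp (y * τ) - b₁ * Real.exp (-(y * σ))) (a₂ - b₁)
        - (b₂ * Real.exp ((a₂ - b₁) * σ) - a₁ * Real.exp (-((a₂ - b₁) * τ)))) ∧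
    Tendsto (fun x : ℝ =>
      Function.invFun (fun y : ℝ => a₂ * Real.exp (y * τ) - b₁ * Real.exp (-(y * σ))) x
        - (b₂ * Real.exp (x * σ) - a₁ * Real.exp (-(x * τ)))) atTop atBot ∧
    ∃ x₀ : ℝ, a₂ - b₁ < x₀ ∧
      Function.invFun (fun y : ℝ => a₂ * Real.exp (y * τ) - b₁ * Real.exp (-(y * σ))) x₀
        = b₂ * Real.exp (x₀ * σ) - a₁ * Real.exp (-(x₀ * τ)) ∧
      0 < b₂ * Real.exp (x₀ * σ) - a₁ * Real.exp (-(x₀ * τ)) ∧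
      a₂ * Real.exp ((b₂ * Real.exp (x₀ * σ) - a₁ * Real.exp (-(x₀ * τ))) * τ)
        - b₁ * Real.exp (-((b₂ * Real.exp (x₀ * σ) - a₁ * Real.exp (-(x₀ * τ))) * σ)) ≤ x₀ := by
  set e := expDiff.orderIso ha₂ hb₁ hτ hσ
  set f := expDiff b₂ a₁ σ τ
  have he : ⇑e = expDiff a₂ b₁ τ σ := expDiff.coe_orderIso ha₂ hb₁ hτ hσ
  have hinv : Function.invFun (expDiff a₂ b₁ τ σ) = e.symm := he ▸ e.invFun_eq_symm
  have he_zero : e.symm (a₂ - b₁) = 0 := e.symm_apply_eq.2 (by rw [he, expDiff.apply_zero])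
  have hf_mono : StrictMono f := expDiff.strictMono hb₂ ha₁.le hσ hτ.le
  have hf_root : f ((1 / (τ + σ)) * log (a₁ / b₂)) = 0 := by
    rw [one_div_mul_eq_div, add_comm]
    exact expDiff.apply_log_div_eq_zero hb₂ ha₁ (by positivity)
  have hf_neg : f (a₂ - b₁) < 0 := hf_root ▸ hf_mono h3
  have htend : Tendsto (fun x => e.symm x - f x) atTop atBot :=
    tendsto_sub_expDiff_atBot (c := (a₂ * τ)⁻¹) (d := (b₁ - a₂) / (a₂ * τ))
      ((eventually_ge_atTop (a₂ - b₁)).mono fun x hx =>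
      (expDiff.orderIso_symm_le ha₂ hb₁ hτ hσ hx).trans_eq (by ring))
      hb₂ ha₁.le hσ hτ.le
  obtain ⟨x₀, hx₀, hx₀_root⟩ := exists_gt_eq_zero_of_tendsto_atBot (h := fun x => e.symm x - f x)
    (e.symm.continuous.sub expDiff.continuous) (by rw [he_zero]; linarith) htend
  have hx₀_eq : e.symm x₀ = f x₀ := sub_eq_zero.1 hx₀_root
  refine ⟨expDiff.strictMono ha₂ hb₁.le hτ hσ.le, by simpa only [f, expDiff, neg_mul] using hf_root,
    mul_pos (by positivity) (log_pos ((one_lt_div hb₂).2 h1)), ?_, hinv ▸ htend, x₀, hx₀,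
    hinv ▸ hx₀_eq, ?_, ?_⟩
  · show 0 < Function.invFun (expDiff a₂ b₁ τ σ) (a₂ - b₁) - f (a₂ - b₁)
    rw [hinv, he_zero]
    linarith
  · show 0 < f x₀
    rw [← hx₀_eq, ← he_zero]
    exact e.symm.strictMono hx₀
  · show expDiff a₂ b₁ τ σ (f x₀) ≤ x₀
    rw [← hx₀_eq, ← he, e.apply_symm_apply]

theorem stmt_18 (a₁ a₂ b₁ b₂ τ σ : ℝ)
    (ha₁ : 0 < a₁) (ha₂ : 0 < a₂) (hb₁ : 0 < b₁) (hb₂ : 0 < b₂)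
    (hτ : 0 < τ) (hσ : 0 < σ)
    (h1 : b₂ < a₁) (h2 : 0 < a₂ - b₁)
    (h3 : a₂ - b₁ < (1 / (τ + σ)) * Real.log (a₁ / b₂)) :
    StrictMono (fun y : ℝ => a₂ * Real.exp (y * τ) - b₁ * Real.exp (-(y * σ))) ∧
    (b₂ * Real.exp (((1 / (τ + σ)) * Real.log (a₁ / b₂)) * σ)
      - a₁ * Real.exp (-((1 / (τ + σ)) * Real.log (a₁ / b₂)) * τ) = 0) ∧
    (0 < (1 / (τ + σ)) * Real.log (a₁ / b₂)) ∧
    (0 < Function.invFun (fun y : ℝ => a₂ * Real.exp (y * τ) - b₁ * Real.exp (-(y * σ))) (a₂ - b₁)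
        - (b₂ * Real.exp ((a₂ - b₁) * σ) - a₁ * Real.exp (-((a₂ - b₁) * τ)))) ∧
    Tendsto (fun x : ℝ =>
      Function.invFun (fun y : ℝ => a₂ * Real.exp (y * τ) - b₁ * Real.exp (-(y * σ))) x
        - (b₂ * Real.exp (x * σ) - a₁ * Real.exp (-(x * τ)))) atTop atBot ∧
    ∃ x₀ : ℝ, a₂ - b₁ < x₀ ∧
      Function.invFun (fun y : ℝ => a₂ * Real.exp (y * τ) - b₁ * Real.exp (-(y * σ))) x₀
        = b₂ * Real.exp (x₀ * σ) - a₁ * Real.exp (-(x₀ * τ)) ∧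
      0 < b₂ * Real.exp (x₀ * σ) - a₁ * Real.exp (-(x₀ * τ)) ∧
      a₂ * Real.exp ((b₂ * Real.exp (x₀ * σ) - a₁ * Real.exp (-(x₀ * τ))) * τ)
        - b₁ * Real.exp (-((b₂ * Real.exp (x₀ * σ) - a₁ * Real.exp (-(x₀ * τ))) * σ)) ≤ x₀ :=
  stmt_18_general a₁ a₂ b₁ b₂ τ σ ha₁ ha₂ hb₁ hb₂ hτ hσ h1 h3
end
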